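/- arXiv:1902.05848 — 4 statements merged into one kernel-verified Lean document; each statement's English description precedes it below -/
import Mathlib

section
/- Let m ≥ 2 and d ≥ 1 be integers with gcd(m,d) = 1, and let 1 ≤ k ≤ m−1. Then the set A_k = {m, m+d, …, m+kd} is the minimal generating set of the numerical semigroup ⟨A_k⟩; in particular no element of A_k is a non-negative integer combination of the other elements. -/
/-!
A sum of `n` generators `m + jᵢ d` equals `n m + s d` with `s = ∑ jᵢ ≤ k n`. If `m + i d` were
such a sum avoiding itself, it would split as `(m + j d) + y` with `y ≠ 0`, so `y = n m + s d`
with `n ≥ 1`; then `(i - j - s) d = n m`, and coprimality forces `m ∣ i - j - s > 0`, which is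
impossible because `i ≤ k < m`.
-/

theorem AddSubmonoid.exists_add_of_mem_closure_of_ne_zero {M : Type*} [AddMonoid M] {s : Set M}
    {x : M} (hx : x ∈ closure s) (h0 : x ≠ 0) : ∃ b ∈ s, ∃ y ∈ closure s, x = b + y := by
  induction hx using AddSubmonoid.closure_induction_left with
  | zero => exact absurd rfl h0
  | add_left b hb y hy _ => exact ⟨b, hb, y, hy, rfl⟩

theorem exists_nsmul_add_nsmul_of_mem_closure_arithProg {M : Type*} [AddCommMonoid M]
    {m d y : M} {k : ℕ} (hy : y ∈ AddSubmonoid.closure ((fun i => m + i • d) '' {i | i ≤ k})) :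
    ∃ n s : ℕ, s ≤ k * n ∧ y = n • m + s • d := by
  induction hy using AddSubmonoid.closure_induction with
  | mem _ hx =>
    obtain ⟨i, hi, rfl⟩ := hx
    exact ⟨1, i, by simpa using hi, by simp⟩
  | zero => exact ⟨0, 0, le_rfl, by simp⟩
  | add _ _ _ _ hx hy =>
    obtain ⟨n₁, s₁, hs₁, rfl⟩ := hx
    obtain ⟨n₂, s₂, hs₂, rfl⟩ := hy
    refine ⟨n₁ + n₂, s₁ + s₂, by rw [mul_add]; omega, ?_⟩
    simp only [add_nsmul]
    abel

theorem Nat.le_sub_of_coprime_of_mul_eq_add_mul {m d i j n : ℕ} (hmd : m.Coprime d)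
    (hn : 0 < n * m) (h : i * d = j * d + n * m) : m ≤ i - j := by
  have hji : j < i := Nat.lt_of_mul_lt_mul_right (a := d) (by omega)
  have hsub : (i - j) * d = n * m := by rw [Nat.sub_mul]; omega
  have hdvd : m ∣ i - j := hmd.dvd_of_dvd_mul_right ⟨n, by rw [hsub, mul_comm]⟩
  exact Nat.le_of_dvd (by omega) hdvd

theorem stmt_8_general (m d k : ℕ) (hm : 2 ≤ m) (hgcd : Nat.gcd m d = 1)
    (hk2 : k ≤ m - 1)
    (A : Set ℕ) (hA : A = (fun i => m + i * d) '' {i : ℕ | i ≤ k}) :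
    ∀ a ∈ A, a ∉ AddSubmonoid.closure (A \ {a}) := by
  subst hA
  rintro _ ⟨i, hi : i ≤ k, rfl⟩ hmem
  beta_reduce at hmem
  obtain ⟨_, ⟨⟨j, -, rfl⟩, hne⟩, y, hy, hsplit⟩ :=
    AddSubmonoid.exists_add_of_mem_closure_of_ne_zero hmem (by omega)
  obtain ⟨n, s, hs, rfl⟩ := exists_nsmul_add_nsmul_of_mem_closure_arithProg (m := m) (d := d)
    (by simpa only [smul_eq_mul] using AddSubmonoid.closure_mono Set.sdiff_subset hy)
  beta_reduce at hne
  simp only [smul_eq_mul] at hsplit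
  have hn : 0 < n * m := by
    rcases Nat.eq_zero_or_pos n with rfl | hn
    · obtain rfl : s = 0 := by simpa using hs
      exact (hne (by rw [hsplit]; simp)).elim
    · positivity
  have hm_le : m ≤ i - (j + s) :=
    Nat.le_sub_of_coprime_of_mul_eq_add_mul hgcd hn (by rw [add_mul]; omega)
  omega

/-- For m ≥ 2, d ≥ 1 with gcd(m,d) = 1 and 1 ≤ k ≤ m−1, the arithmetic progression
A_k = {m, m+d, …, m+kd} is the minimal generating set of ⟨A_k⟩: no element of A_k
is a non-negative integer combination of the other elements. -/
theorem stmt_8 (m d k : ℕ) (hm : 2 ≤ m) (hd : 1 ≤ d) (hgcd : Nat.gcd m d = 1)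
    (hk1 : 1 ≤ k) (hk2 : k ≤ m - 1)
    (A : Set ℕ) (hA : A = (fun i => m + i * d) '' {i : ℕ | i ≤ k}) :
    ∀ a ∈ A, a ∉ AddSubmonoid.closure (A \ {a}) :=
  stmt_8_general m d k hm hgcd hk2 A hA
end

section
/- Let S = ⟨n₁, …, n_k⟩ be a numerical semigroup with n₁ < ⋯ < n_k a minimal set of generators and k ≥ 2. Then for every nonzero n ∈ S, L(n)/ℓ(n) ≤ n_k/n₁, and equality holds for n = n₁n_k. Hence the elasticity ρ(S) = sup{L(n)/ℓ(n) : 0 ≠ n ∈ S} equals n_k/n₁ and is attained. -/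
/-!
A factorization of `n` of length `l` satisfies `n₁ l ≤ n ≤ n_k l`, so `L(n) n₁ ≤ n ≤ n_k ℓ(n)`,
which is the bound. For `n = n₁ n_k` the factorizations `n_k · n₁` and `n₁ · n_k` have
lengths `n_k` and `n₁`, so they attain both inequalities.
-/

/-- The set of factorization lengths of `n` over the generators `gens`. -/
def lenSet (k : ℕ) (gens : Fin k → ℕ) (n : ℕ) : Set ℕ :=
  {l | ∃ x : Fin k → ℕ, n = ∑ i, x i * gens i ∧ l = ∑ i, x i}

/-- The elasticity ρ(n) = L(n)/ℓ(n) of `n`, as a rational number. -/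
noncomputable def rho (k : ℕ) (gens : Fin k → ℕ) (n : ℕ) : ℚ :=
  ((sSup (lenSet k gens n) : ℕ) : ℚ) / ((sInf (lenSet k gens n) : ℕ) : ℚ)

section LengthSet

variable {k : ℕ} {gens : Fin k → ℕ} {n l a b : ℕ}

lemma lenSet_nonempty_of_mem_closure (hn : n ∈ AddSubmonoid.closure (Set.range gens)) :
    (lenSet k gens n).Nonempty := by
  obtain ⟨x, hx⟩ := AddSubmonoid.exists_of_mem_closure_range gens n hn
  exact ⟨∑ i, x i, x, by simpa only [smul_eq_mul] using hx, rfl⟩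

lemma mul_le_of_mem_lenSet (hlo : ∀ i, a ≤ gens i) (hl : l ∈ lenSet k gens n) :
    a * l ≤ n := by
  obtain ⟨x, rfl, rfl⟩ := hl
  rw [Finset.mul_sum]
  exact Finset.sum_le_sum fun i _ => by rw [mul_comm]; exact Nat.mul_le_mul_left _ (hlo i)

lemma le_mul_of_mem_lenSet (hhi : ∀ i, gens i ≤ b) (hl : l ∈ lenSet k gens n) :
    n ≤ b * l := by
  obtain ⟨x, rfl, rfl⟩ := hl
  rw [Finset.mul_sum]
  exact Finset.sum_le_sum fun i _ => by rw [mul_comm b]; exact Nat.mul_le_mul_left _ (hhi i)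

lemma mem_lenSet_mul (c : ℕ) (i : Fin k) : c ∈ lenSet k gens (c * gens i) :=
  ⟨Pi.single i c, by simp [Pi.single_apply, ite_mul], by simp⟩

lemma bddAbove_lenSet (ha : 0 < a) (hlo : ∀ i, a ≤ gens i) : BddAbove (lenSet k gens n) :=
  ⟨n, fun l hl => (Nat.le_mul_of_pos_left l ha).trans (mul_le_of_mem_lenSet hlo hl)⟩

lemma rho_le_div (ha : 0 < a) (hlo : ∀ i, a ≤ gens i) (hhi : ∀ i, gens i ≤ b) (hn : n ≠ 0)
    (hne : (lenSet k gens n).Nonempty) : rho k gens n ≤ (b : ℚ) / a := by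
  have hmax := mul_le_of_mem_lenSet hlo (Nat.sSup_mem hne (bddAbove_lenSet ha hlo))
  have hmin := le_mul_of_mem_lenSet hhi (Nat.sInf_mem hne)
  have hmin_pos : 0 < sInf (lenSet k gens n) := Nat.pos_of_ne_zero fun h => by
    rw [h, mul_zero] at hmin
    omega
  rw [rho, div_le_div_iff₀ (by exact_mod_cast hmin_pos) (by exact_mod_cast ha)]
  exact_mod_cast (mul_comm _ _).trans_le (hmax.trans hmin)

lemma rho_mul_eq_div {i j : Fin k} (hpos : 0 < gens i) (hlo : ∀ t, gens i ≤ gens t)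
    (hhi : ∀ t, gens t ≤ gens j) :
    rho k gens (gens i * gens j) = (gens j : ℚ) / gens i := by
  have hsup : IsGreatest (lenSet k gens (gens i * gens j)) (gens j) :=
    ⟨mul_comm (gens i) (gens j) ▸ mem_lenSet_mul _ i,
      fun l hl => Nat.le_of_mul_le_mul_left (mul_le_of_mem_lenSet hlo hl) hpos⟩
  have hinf : IsLeast (lenSet k gens (gens i * gens j)) (gens i) :=
    ⟨mem_lenSet_mul _ j, fun l hl => Nat.le_of_mul_le_mul_left
      (mul_comm (gens i) (gens j) ▸ le_mul_of_mem_lenSet hhi hl) (hpos.trans_le (hhi i))⟩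
  rw [rho, hsup.csSup_eq, hinf.csInf_eq]

end LengthSet

/-- For a minimally generated numerical semigroup S = ⟨n₁ < ⋯ < n_k⟩ with k ≥ 2:
ρ(n) ≤ n_k/n₁ for all nonzero n ∈ S, with equality at n = n₁n_k; hence the
elasticity ρ(S) equals n_k/n₁ and is attained. -/
theorem stmt_11 (k : ℕ) (hk : 2 ≤ k) (gens : Fin k → ℕ)
    (hmono : StrictMono gens)
    (hmin : ∀ i, gens i ∉ AddSubmonoid.closure (Set.range gens \ {gens i})) :
    (∀ n : ℕ, n ≠ 0 → n ∈ AddSubmonoid.closure (Set.range gens) →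
        rho k gens n ≤ (gens ⟨k - 1, by omega⟩ : ℚ) / (gens ⟨0, by omega⟩ : ℚ)) ∧
    rho k gens (gens ⟨0, by omega⟩ * gens ⟨k - 1, by omega⟩) =
      (gens ⟨k - 1, by omega⟩ : ℚ) / (gens ⟨0, by omega⟩ : ℚ) ∧
    IsGreatest {q : ℚ | ∃ n : ℕ, n ≠ 0 ∧ n ∈ AddSubmonoid.closure (Set.range gens) ∧
        q = rho k gens n}
      ((gens ⟨k - 1, by omega⟩ : ℚ) / (gens ⟨0, by omega⟩ : ℚ)) := by
  set i₀ : Fin k := ⟨0, by omega⟩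
  set iₖ : Fin k := ⟨k - 1, by omega⟩
  have hpos : 0 < gens i₀ := Nat.pos_of_ne_zero fun h => hmin i₀ (h ▸ AddSubmonoid.zero_mem _)
  have hlo : ∀ i, gens i₀ ≤ gens i := fun i => hmono.monotone (Fin.le_def.2 (Nat.zero_le _))
  have hhi : ∀ i, gens i ≤ gens iₖ := fun i =>
    hmono.monotone (Fin.le_def.2 (Nat.le_sub_one_of_lt i.isLt))
  have hbound : ∀ n : ℕ, n ≠ 0 → n ∈ AddSubmonoid.closure (Set.range gens) →
      rho k gens n ≤ (gens iₖ : ℚ) / gens i₀ := fun n hn hmem =>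
    rho_le_div hpos hlo hhi hn (lenSet_nonempty_of_mem_closure hmem)
  have hattained := rho_mul_eq_div hpos hlo hhi
  have hmem : gens i₀ * gens iₖ ∈ AddSubmonoid.closure (Set.range gens) :=
    smul_eq_mul (gens i₀) (gens iₖ) ▸
      AddSubmonoid.nsmul_mem _ (AddSubmonoid.subset_closure (Set.mem_range_self iₖ)) (gens i₀)
  refine ⟨hbound, hattained,
    ⟨⟨_, Nat.mul_ne_zero hpos.ne' (hpos.trans_le (hhi i₀)).ne', hmem, hattained.symm⟩, ?_⟩⟩
  rintro _ ⟨n, hn, hmem, rfl⟩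
  exact hbound n hn hmem
end

section
/- Let S = ⟨a, a+d, …, a+kd⟩ with gcd(a,d) = 1 and 1 ≤ k ≤ a−1, and let n ∈ S be written as n = c₁a + c₂d with c₁, c₂ ∈ ℤ≥0 and 0 ≤ c₂ < a. Then the set of factorization lengths of n is L(n) = {c₁ + jd : j ∈ ℤ, (c₂ − c₁k)/(a + kd) ≤ j ≤ 0}. -/
/-! A factorization `x` of length `l` has `n = l * a + m * d`, where `m = ∑ i * x i` can be any
value in `[0, l * k]`. Since `gcd a d = 1`, the solutions of `l * a + m * d = c₁ * a + c₂ * d`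
are `l = c₁ + j * d`, `m = c₂ - j * a`; then `0 ≤ m` forces `j ≤ 0` (as `c₂ < a`), and
`m ≤ l * k` is the lower bound `c₂ - c₁ * k ≤ j * (a + k * d)`. -/

open Finset

theorem sum_mul_arith_eq (a d : ℕ) {k : ℕ} (x : Fin (k + 1) → ℕ) :
    ∑ i, x i * (a + (i : ℕ) * d) = (∑ i, x i) * a + (∑ i : Fin (k + 1), (i : ℕ) * x i) * d := by
  rw [sum_mul, sum_mul, ← sum_add_distrib]
  exact sum_congr rfl fun i _ => by ring

theorem sum_val_mul_le_sum_mul {k : ℕ} (x : Fin (k + 1) → ℕ) :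
    ∑ i : Fin (k + 1), (i : ℕ) * x i ≤ (∑ i, x i) * k := by
  rw [sum_mul]
  exact sum_le_sum fun i _ => by rw [mul_comm]; exact Nat.mul_le_mul_left _ (Nat.le_of_lt_succ i.isLt)

theorem exists_sum_eq_and_sum_val_mul_eq {k l m : ℕ} (h : m ≤ l * k) :
    ∃ x : Fin (k + 1) → ℕ, ∑ i, x i = l ∧ ∑ i : Fin (k + 1), (i : ℕ) * x i = m := by
  induction l generalizing m with
  | zero => exact ⟨0, by simp, by simp at h; simp [h]⟩
  | succ l ih =>
    obtain ⟨x, hx, hxm⟩ := ih (m := m - min m k) (by rw [Nat.succ_mul] at h; omega)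
    refine ⟨x + Pi.single ⟨min m k, by omega⟩ 1, ?_, ?_⟩
    · simp [sum_add_distrib, hx]
    · simp [mul_add, sum_add_distrib, hxm, Pi.single_apply]

theorem exists_sum_mul_add_mul_eq_iff (a d : ℕ) {k l n : ℕ} :
    (∃ x : Fin (k + 1) → ℕ, n = ∑ i, x i * (a + (i : ℕ) * d) ∧ l = ∑ i, x i) ↔
      ∃ m ≤ l * k, n = l * a + m * d := by
  constructor
  · rintro ⟨x, rfl, rfl⟩
    exact ⟨_, sum_val_mul_le_sum_mul x, sum_mul_arith_eq a d x⟩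
  · rintro ⟨m, hm, rfl⟩
    obtain ⟨x, hx, hxm⟩ := exists_sum_eq_and_sum_val_mul_eq hm
    exact ⟨x, by rw [sum_mul_arith_eq, hx, hxm], hx.symm⟩

theorem Int.mul_add_mul_eq_iff {a d c₁ c₂ l m : ℤ} (hcop : IsCoprime a d) (ha : a ≠ 0) :
    l * a + m * d = c₁ * a + c₂ * d ↔ ∃ j, l = c₁ + j * d ∧ m = c₂ - j * a := by
  refine ⟨fun h => ?_, fun ⟨j, hl, hm⟩ => by subst hl hm; ring⟩
  obtain ⟨j, hj⟩ : a ∣ c₂ - m := hcop.dvd_of_dvd_mul_right ⟨l - c₁, by linear_combination -h⟩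
  refine ⟨j, ?_, by linarith⟩
  apply mul_right_cancel₀ ha
  linear_combination h + d * hj

theorem exists_le_mul_add_mul_eq_iff {a d k c₁ c₂ l : ℕ} (hgcd : Nat.gcd a d = 1) (hc₂ : c₂ < a) :
    (∃ m ≤ l * k, c₁ * a + c₂ * d = l * a + m * d) ↔
      ∃ j : ℤ, (c₂ : ℤ) - c₁ * k ≤ j * (a + k * d) ∧ j ≤ 0 ∧ (l : ℤ) = c₁ + j * d := by
  have hcop : IsCoprime (a : ℤ) d := Int.isCoprime_iff_gcd_eq_one.mpr hgcd
  have ha : (a : ℤ) ≠ 0 := by omega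
  constructor
  · rintro ⟨m, hm, h⟩
    have h : (l : ℤ) * a + m * d = c₁ * a + c₂ * d := by exact_mod_cast h.symm
    obtain ⟨j, hl, hmj⟩ := (Int.mul_add_mul_eq_iff hcop ha).mp h
    have hj : j ≤ 0 := by
      by_contra! hj
      nlinarith
    refine ⟨j, ?_, hj, hl⟩
    have : (m : ℤ) ≤ l * k := by exact_mod_cast hm
    rw [hmj, hl] at this
    linarith
  · rintro ⟨j, hineq, hj, hl⟩
    have hm : 0 ≤ (c₂ : ℤ) - j * a := by nlinarith
    lift (c₂ : ℤ) - j * a to ℕ using hm with m hmj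
    refine ⟨m, ?_, ?_⟩
    · zify
      rw [hmj, hl]
      linarith
    · zify
      exact ((Int.mul_add_mul_eq_iff hcop ha).mpr ⟨j, hl, hmj⟩).symm

theorem stmt_17_general (a d k : ℕ) (hgcd : Nat.gcd a d = 1)
    (n c₁ c₂ : ℕ) (hc₂ : c₂ < a) (hrep : n = c₁ * a + c₂ * d) :
    {l : ℕ | ∃ x : Fin (k + 1) → ℕ, n = ∑ i, x i * (a + (i : ℕ) * d) ∧ l = ∑ i, x i} =
      {l : ℕ | ∃ j : ℤ, ((c₂ : ℚ) - (c₁ : ℚ) * (k : ℚ)) / ((a : ℚ) + (k : ℚ) * (d : ℚ)) ≤ (j : ℚ) ∧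
        j ≤ 0 ∧ (l : ℤ) = (c₁ : ℤ) + j * (d : ℤ)} := by
  have ha : (0 : ℚ) < a := by exact_mod_cast Nat.zero_lt_of_lt hc₂
  have hpos : (0 : ℚ) < a + k * d := by positivity
  ext l
  rw [Set.mem_ofPred_eq, Set.mem_ofPred_eq, exists_sum_mul_add_mul_eq_iff, hrep,
    exists_le_mul_add_mul_eq_iff hgcd hc₂]
  simp_rw [div_le_iff₀ hpos]
  exact_mod_cast Iff.rfl

/-- For an arithmetical numerical semigroup S = ⟨a, a+d, …, a+kd⟩ with gcd(a,d)=1 and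
1 ≤ k ≤ a−1, if n ∈ S is written as n = c₁a + c₂d with 0 ≤ c₂ < a, then the set of
factorization lengths of n is {c₁ + jd : j ∈ ℤ, (c₂ − c₁k)/(a + kd) ≤ j ≤ 0}. -/
theorem stmt_17 (a d k : ℕ) (ha : 2 ≤ a) (hgcd : Nat.gcd a d = 1)
    (hk1 : 1 ≤ k) (hk2 : k ≤ a - 1)
    (n c₁ c₂ : ℕ) (hc₂ : c₂ < a) (hrep : n = c₁ * a + c₂ * d)
    (hn : n ∈ AddSubmonoid.closure ((fun i => a + i * d) '' {i : ℕ | i ≤ k})) :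
    {l : ℕ | ∃ x : Fin (k + 1) → ℕ, n = ∑ i, x i * (a + (i : ℕ) * d) ∧ l = ∑ i, x i} =
      {l : ℕ | ∃ j : ℤ, ((c₂ : ℚ) - (c₁ : ℚ) * (k : ℚ)) / ((a : ℚ) + (k : ℚ) * (d : ℚ)) ≤ (j : ℚ) ∧
        j ≤ 0 ∧ (l : ℤ) = (c₁ : ℤ) + j * (d : ℤ)} :=
  stmt_17_general a d k hgcd n c₁ c₂ hc₂ hrep
end

section
/- If n₂ > n₁ > 1 are coprime integers and S = ⟨n₁, n₂⟩, then Δ(S) = {n₂ − n₁}; that is, for every n ∈ S with at least two factorizations, consecutive factorization lengths differ by exactly n₂ − n₁. -/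
/-!
Two factorizations of the same element of `⟨n₁, n₂⟩` differ by a multiple of the trade
`n₂ · n₁ = n₁ · n₂`, i.e. by `t` copies of the move `(x₁ + n₂, x₂) ↦ (x₁, x₂ + n₁)`, which lowers
the length by exactly `n₂ - n₁`. Hence all lengths of `n` are congruent modulo `n₂ - n₁`, and
below any length other than the smallest one there is another length exactly `n₂ - n₁` lower.
The gap is attained by `n₂ n₁ + n₂`, with factorizations `(n₂, 1)` and `(0, n₁ + 1)`.
-/

/-- The set of factorization lengths of `n` over the generators `n₁, n₂`. -/
def lenSet2 (n₁ n₂ n : ℕ) : Set ℕ :=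
  {l | ∃ x₁ x₂ : ℕ, n = x₁ * n₁ + x₂ * n₂ ∧ l = x₁ + x₂}

/-- The delta set Δ(n): gaps between consecutive factorization lengths of n. -/
def deltaSet2 (n₁ n₂ n : ℕ) : Set ℕ :=
  {d | 0 < d ∧ ∃ l, l ∈ lenSet2 n₁ n₂ n ∧ l + d ∈ lenSet2 n₁ n₂ n ∧
    ∀ j, l < j → j < l + d → j ∉ lenSet2 n₁ n₂ n}

section Factorizations

variable {n₁ n₂ : ℕ}

theorem exists_int_shift_of_factorizations (hco : n₁.Coprime n₂) (hn₂ : n₂ ≠ 0)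
    {x₁ x₂ y₁ y₂ : ℕ} (h : x₁ * n₁ + x₂ * n₂ = y₁ * n₁ + y₂ * n₂) :
    ∃ t : ℤ, (y₁ : ℤ) = x₁ + t * n₂ ∧ (x₂ : ℤ) = y₂ + t * n₁ := by
  have hZ : ((y₁ : ℤ) - x₁) * n₁ = n₂ * ((x₂ : ℤ) - y₂) := by
    have h' : (x₁ : ℤ) * n₁ + x₂ * n₂ = y₁ * n₁ + y₂ * n₂ := mod_cast h
    linear_combination -h'
  obtain ⟨t, ht⟩ : (n₂ : ℤ) ∣ (y₁ : ℤ) - x₁ :=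
    (Nat.isCoprime_iff_coprime.mpr hco.symm).dvd_of_dvd_mul_right ⟨_, hZ⟩
  have hx₂ : (x₂ : ℤ) - y₂ = t * n₁ :=
    mul_left_cancel₀ (Int.natCast_ne_zero.mpr hn₂) (by rw [← hZ, ht]; ring)
  exact ⟨t, by linarith, by linarith⟩

theorem mem_lenSet2_of_exchange {n x₁ x₂ : ℕ} (hn : n = (x₁ + n₂) * n₁ + x₂ * n₂) :
    x₁ + (x₂ + n₁) ∈ lenSet2 n₁ n₂ n :=
  ⟨x₁, x₂ + n₁, by rw [hn]; ring, rfl⟩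

theorem sub_dvd_sub_of_mem_lenSet2 (hco : n₁.Coprime n₂) (hn₂ : n₂ ≠ 0) {n l l' : ℕ}
    (hl : l ∈ lenSet2 n₁ n₂ n) (hl' : l' ∈ lenSet2 n₁ n₂ n) :
    (n₂ - n₁ : ℤ) ∣ (l' : ℤ) - l := by
  obtain ⟨x₁, x₂, hx, rfl⟩ := hl
  obtain ⟨y₁, y₂, hy, rfl⟩ := hl'
  obtain ⟨t, h₁, h₂⟩ := exists_int_shift_of_factorizations hco hn₂ (hx.symm.trans hy)
  exact ⟨t, by push_cast; linear_combination h₁ - h₂⟩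

theorem sub_mem_lenSet2_of_lt (hco : n₁.Coprime n₂) (h : n₁ < n₂) {n l l' : ℕ}
    (hl : l ∈ lenSet2 n₁ n₂ n) (hl' : l' ∈ lenSet2 n₁ n₂ n) (hlt : l < l') :
    l' - (n₂ - n₁) ∈ lenSet2 n₁ n₂ n := by
  obtain ⟨x₁, x₂, hx, rfl⟩ := hl
  obtain ⟨y₁, y₂, hy, rfl⟩ := hl'
  obtain ⟨t, h₁, h₂⟩ := exists_int_shift_of_factorizations hco (by omega) (hx.symm.trans hy)
  have ht : 0 < t := by
    have hlen : ((y₁ + y₂ : ℕ) : ℤ) - (x₁ + x₂ : ℕ) = t * (n₂ - n₁) := by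
      push_cast; linear_combination h₁ - h₂
    have : (0 : ℤ) < t * (n₂ - n₁) := by omega
    exact pos_of_mul_pos_left this (by omega)
  have hy₁ : n₂ ≤ y₁ := by
    have : (n₂ : ℤ) ≤ y₁ := by nlinarith
    omega
  obtain ⟨z, rfl⟩ := Nat.exists_eq_add_of_le' hy₁
  convert mem_lenSet2_of_exchange hy using 1
  omega

theorem eq_of_mem_deltaSet2 (hco : n₁.Coprime n₂) (h : n₁ < n₂) {n d : ℕ}
    (hd : d ∈ deltaSet2 n₁ n₂ n) : d = n₂ - n₁ := by
  obtain ⟨hd₀, l, hl, hld, hgap⟩ := hd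
  have hdvd : (n₂ - n₁ : ℤ) ∣ d := by
    simpa using sub_dvd_sub_of_mem_lenSet2 hco (by omega) hl hld
  have hle : n₂ - n₁ ≤ d := by
    have := Int.le_of_dvd (by omega) hdvd
    omega
  by_contra hne
  exact hgap _ (by omega) (by omega) (sub_mem_lenSet2_of_lt hco h hl hld (by omega))

theorem sub_mem_deltaSet2 (hco : n₁.Coprime n₂) (h : n₁ < n₂) {n x₁ x₂ : ℕ}
    (hn : n = (x₁ + n₂) * n₁ + x₂ * n₂) : n₂ - n₁ ∈ deltaSet2 n₁ n₂ n := by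
  have hl := mem_lenSet2_of_exchange hn
  refine ⟨by omega, _, hl, ⟨x₁ + n₂, x₂, hn, by omega⟩, fun j hj hj' hjL => ?_⟩
  have := Int.eq_zero_of_dvd_of_nonneg_of_lt (by omega) (by omega)
    (sub_dvd_sub_of_mem_lenSet2 hco (by omega) hl hjL)
  omega

end Factorizations

theorem stmt_18_general (n₁ n₂ : ℕ) (h12 : n₁ < n₂)
    (hgcd : Nat.Coprime n₁ n₂) :
    {d : ℕ | ∃ n : ℕ, n ≠ 0 ∧ n ∈ AddSubmonoid.closure ({n₁, n₂} : Set ℕ) ∧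
        d ∈ deltaSet2 n₁ n₂ n} = {n₂ - n₁} := by
  ext d
  constructor
  · rintro ⟨n, -, -, hd⟩
    exact eq_of_mem_deltaSet2 hgcd h12 hd
  · rintro rfl
    refine ⟨n₂ * n₁ + n₂, by omega, ?_, sub_mem_deltaSet2 hgcd h12 (x₁ := 0) (x₂ := 1) (by ring)⟩
    exact (AddSubmonoid.mem_closure_pair _ _ _).mpr ⟨n₂, 1, by simp [mul_comm]⟩

/-- If n₂ > n₁ > 1 are coprime, then Δ(⟨n₁,n₂⟩) = {n₂ − n₁}. -/
theorem stmt_18 (n₁ n₂ : ℕ) (h1 : 1 < n₁) (h12 : n₁ < n₂)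
    (hgcd : Nat.Coprime n₁ n₂) :
    {d : ℕ | ∃ n : ℕ, n ≠ 0 ∧ n ∈ AddSubmonoid.closure ({n₁, n₂} : Set ℕ) ∧
        d ∈ deltaSet2 n₁ n₂ n} = {n₂ - n₁} :=
  stmt_18_general n₁ n₂ h12 hgcd
end
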